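/- If f : ℝ → ℝ is continuous, f(t) = 0 for t ≤ 0, and there exists θ > 2 with θ·F(t) ≤ f(t)·t for all t > 0, where F(t) = ∫₀ᵗ f(τ)dτ and F(t₀) > 0 for some t₀ > 0, then there exist constants c₁ > 0 and c₂ ≥ 0 such that F(t) ≥ c₁·t^θ − c₂ for all t ≥ 0. -/
import Mathlib

open intervalIntegral Real Set

theorem stmt_0 (f : ℝ → ℝ) (F : ℝ → ℝ) (θ : ℝ)
    (hf : Continuous f)
    (hf0 : ∀ t : ℝ, t ≤ 0 → f t = 0)
    (hF : ∀ t : ℝ, F t = ∫ τ in (0:ℝ)..t, f τ)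
    (hθ : θ > 2)
    (hAR : ∀ t : ℝ, t > 0 → θ * F t ≤ f t * t)
    (t₀ : ℝ) (ht₀ : t₀ > 0) (hFt₀ : F t₀ > 0) :
    ∃ c₁ c₂ : ℝ, c₁ > 0 ∧ c₂ ≥ 0 ∧ ∀ t : ℝ, t ≥ 0 → F t ≥ c₁ * t ^ θ - c₂ := by
  have hFe : F = fun u => ∫ τ in (0:ℝ)..u, f τ := funext hF
  have hderiv : ∀ t : ℝ, HasDerivAt F (f t) t := by
    intro t
    rw [hFe]
    exact (hf.integral_hasStrictDerivAt 0 t).hasDerivAt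
  have hFcont : Continuous F := continuous_iff_continuousAt.2 fun t => (hderiv t).continuousAt
  -- positivity on [t₀, ∞)
  have hpos : ∀ u : ℝ, t₀ ≤ u → F t₀ / 2 < F u := by
    by_contra h
    push_neg at h
    obtain ⟨u₀, hu₀, hu₀'⟩ := h
    set S : Set ℝ := {u | t₀ ≤ u ∧ F u ≤ F t₀ / 2} with hS
    have hSne : S.Nonempty := ⟨u₀, hu₀, hu₀'⟩
    have hSclosed : IsClosed S :=
      (isClosed_le continuous_const continuous_id).inter (isClosed_le hFcont continuous_const)
    have hSbdd : BddBelow S := ⟨t₀, fun x hx => hx.1⟩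
    set T := sInf S with hT
    have hTS : T ∈ S := hSclosed.csInf_mem hSne hSbdd
    have hTt₀ : t₀ < T := by
      rcases lt_or_eq_of_le hTS.1 with h' | h'
      · exact h'
      · exfalso; have := hTS.2; rw [← h'] at this; linarith
    have hmid : ∀ x ∈ Ioo t₀ T, F t₀ / 2 < F x := by
      intro x hx
      by_contra hc
      push_neg at hc
      have : x ∈ S := ⟨le_of_lt hx.1, hc⟩
      have := csInf_le hSbdd this
      linarith [hx.2]
    have hmono : StrictMonoOn F (Icc t₀ T) := by
      apply strictMonoOn_of_deriv_pos (convex_Icc _ _) hFcont.continuousOn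
      intro x hx
      rw [interior_Icc] at hx
      rw [(hderiv x).deriv]
      have hx0 : 0 < x := lt_trans ht₀ hx.1
      have h1 := hAR x hx0
      have h2 := hmid x hx
      nlinarith
    have : F t₀ < F T := hmono (left_mem_Icc.2 (le_of_lt hTt₀)) (right_mem_Icc.2 (le_of_lt hTt₀)) hTt₀
    linarith [hTS.2]
  -- log comparison on [t₀, ∞)
  set φ : ℝ → ℝ := fun u => Real.log (F u) - θ * Real.log u with hφ
  have hφmono : MonotoneOn φ (Ici t₀) := by
    have hφderiv : ∀ u : ℝ, t₀ ≤ u → HasDerivAt φ (f u / F u - θ * u⁻¹) u := by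
      intro u hu
      have hu0 : 0 < u := lt_of_lt_of_le ht₀ hu
      have hFu : 0 < F u := lt_trans (by linarith) (hpos u hu)
      have h1 : HasDerivAt (fun v => Real.log (F v)) (f u / F u) u := (hderiv u).log (ne_of_gt hFu)
      have h2 : HasDerivAt (fun v => θ * Real.log v) (θ * u⁻¹) u :=
        (Real.hasDerivAt_log (ne_of_gt hu0)).const_mul θ
      exact h1.sub h2
    apply monotoneOn_of_deriv_nonneg (convex_Ici t₀)
    · intro u hu
      exact ((hφderiv u hu).continuousAt).continuousWithinAt
    · intro u hu
      rw [interior_Ici] at hu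
      exact (hφderiv u (le_of_lt hu)).differentiableAt.differentiableWithinAt
    · intro u hu
      rw [interior_Ici] at hu
      rw [(hφderiv u (le_of_lt hu)).deriv]
      have hu0 : 0 < u := lt_trans ht₀ hu
      have hFu : 0 < F u := lt_trans (by linarith) (hpos u (le_of_lt hu))
      have h1 := hAR u hu0
      rw [sub_nonneg]
      rw [show θ * u⁻¹ = θ / u by ring, div_le_div_iff₀ hu0 hFu]
      nlinarith
  set c₁ : ℝ := F t₀ / t₀ ^ θ with hc₁
  have hc₁pos : 0 < c₁ := div_pos hFt₀ (Real.rpow_pos_of_pos ht₀ θ)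
  have hmain : ∀ t : ℝ, t₀ ≤ t → c₁ * t ^ θ ≤ F t := by
    intro t ht
    have ht0 : 0 < t := lt_of_lt_of_le ht₀ ht
    have hFt : 0 < F t := lt_trans (by linarith) (hpos t ht)
    have h := hφmono (mem_Ici.2 (le_refl t₀)) (mem_Ici.2 (le_trans (le_refl t₀) ht)) ht
    simp only [hφ] at h
    have key : Real.log (F t₀) + θ * Real.log t - θ * Real.log t₀ ≤ Real.log (F t) := by linarith
    have := Real.exp_le_exp.2 key
    rw [Real.exp_log hFt] at this
    calc c₁ * t ^ θ = F t₀ / t₀ ^ θ * t ^ θ := rfl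
      _ = Real.exp (Real.log (F t₀) + θ * Real.log t - θ * Real.log t₀) := by
          rw [Real.exp_sub, Real.exp_add, Real.exp_log hFt₀,
            Real.rpow_def_of_pos ht0, Real.rpow_def_of_pos ht₀]
          ring_nf
      _ ≤ F t := this
  -- bound on [0, t₀]
  have hrpow_cont : Continuous (fun u : ℝ => u ^ θ) :=
    continuous_iff_continuousAt.2 fun x => Real.continuousAt_rpow_const x θ (Or.inr (by linarith))
  have hgcont : Continuous (fun u : ℝ => c₁ * u ^ θ - F u) :=
    ((continuous_const.mul hrpow_cont).sub hFcont)
  obtain ⟨M, hM, hMmax⟩ := (isCompact_Icc : IsCompact (Icc (0:ℝ) t₀)).exists_isMaxOn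
    ⟨0, le_refl 0, le_of_lt ht₀⟩ hgcont.continuousOn
  refine ⟨c₁, max (c₁ * M ^ θ - F M) 0, hc₁pos, le_max_right _ _, ?_⟩
  intro t ht
  rcases le_or_gt t t₀ with h | h
  · have := hMmax (⟨ht, h⟩ : t ∈ Icc (0:ℝ) t₀)
    have h2 : c₁ * t ^ θ - F t ≤ max (c₁ * M ^ θ - F M) 0 := le_trans this (le_max_left _ _)
    linarith
  · have := hmain t (le_of_lt h)
    have h0 : (0:ℝ) ≤ max (c₁ * M ^ θ - F M) 0 := le_max_right _ _
    linarith
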